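/- arXiv:1511.02901 — 3 statements merged into one kernel-verified Lean document; each statement's English description precedes it below -/
import Mathlib

section
/- With ∇_{ad_ã} = ã· + μ(ã) as above, the curvature R(ad_ã, ad_b̃) vanishes for all inner *-derivations ad_ã, ad_b̃ if and only if μ is a Lie algebra homomorphism, i.e. μ([b̃, ã]) = [μ(b̃), μ(ã)] for all ã, b̃ ∈ g. -/
/-- With `∇_{ad aa} = aa• + μ(aa)`, the curvature
`R(ad aa, ad bb) = [∇_{ad bb}, μ(aa)] - μ([bb,aa])` vanishes on all pairs of inner
*-derivations iff `μ` is a Lie algebra homomorphism. -/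
theorem stmt9 {A : Type*} [Ring A] [Algebra ℂ A] [StarRing A] {n : ℕ}
    (τ : A →ₗ[ℂ] ℂ)
    (G : Set A) (hG : G = {x : A | star x = -x ∧ τ x = 0})
    (μ : A → (Fin n → A) → (Fin n → A))
    (hμlin : ∀ b ∈ G, ∀ (a : A) (Y : Fin n → A), μ b (a • Y) = a • μ b Y) :
    (∀ aa ∈ G, ∀ bb ∈ G, ∀ Y : Fin n → A,
        (bb • μ aa Y + μ bb (μ aa Y)) - (μ aa (bb • Y) + μ aa (μ bb Y))
          - μ (bb * aa - aa * bb) Y = 0) ↔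
    (∀ aa ∈ G, ∀ bb ∈ G, ∀ Y : Fin n → A,
        μ (bb * aa - aa * bb) Y = μ bb (μ aa Y) - μ aa (μ bb Y)) := by
  constructor
  · intro h aa ha bb hb Y
    have h1 := h aa ha bb hb Y
    rw [hμlin aa ha bb Y] at h1
    have : μ bb (μ aa Y) - μ aa (μ bb Y) - μ (bb * aa - aa * bb) Y = 0 := by
      rw [← h1]; abel
    linear_combination (norm := abel) -this
  · intro h aa ha bb hb Y
    rw [hμlin aa ha bb Y, h aa ha bb hb Y]
    abel
end

section
/- For the Levi-Civita connection of the diagonal metric g_{jk} = δ_{jk} a_k on A², the curvature component satisfies 4R_{1,2,1,2} = (∂_1a_1)a_1⁻¹(∂_1a_2) + (∂_2a_1)a_2⁻¹(∂_2a_2) + (∂_2a_1)a_1⁻¹(∂_2a_1) + (∂_1a_2)a_2⁻¹(∂_1a_2) − 2(∂_1∂_1a_2 + ∂_2∂_2a_1), where R_{1,2,1,2} = ⟨R(∂_1,∂_2)∂_1, ∂_2⟩ and R(∂_1,∂_2) = ∇_2∇_1 − ∇_1∇_2. -/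
/-- Christoffel data for the diagonal metric `g_{jk} = δ_{jk} a_k` on `A²`. -/
noncomputable def Gamma {A : Type*} [Ring A] [Algebra ℂ A]
    (pd : Fin 2 → A → A) (a : Fin 2 → A) (j k l : Fin 2) : A :=
  (2 : ℂ)⁻¹ • ((if k = l then pd j (a k) else 0) + (if j = l then pd k (a j) else 0)
    - (if j = k then pd l (a j) else 0))

/-- Components of `∇_j ∂_k` (with `v l` the inverse of `a l`). -/
noncomputable def nab {A : Type*} [Ring A] [Algebra ℂ A]
    (pd : Fin 2 → A → A) (a v : Fin 2 → A) (j k : Fin 2) : Fin 2 → A :=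
  fun l => Gamma pd a j k l * v l

/-- Covariant derivative `∇_j` acting on a vector `Y = Σ_k Y_k ∂_k` in the free left
module `A²`. -/
noncomputable def cov {A : Type*} [Ring A] [Algebra ℂ A]
    (pd : Fin 2 → A → A) (a v : Fin 2 → A) (j : Fin 2) (Y : Fin 2 → A) : Fin 2 → A :=
  fun l => pd j (Y l) + ∑ k, Y k * nab pd a v j k l

/-- The curvature component `R_{1,2,1,2} = ⟨(∇_2∇_1 − ∇_1∇_2)∂_1, ∂_2⟩`. -/
noncomputable def R1212 {A : Type*} [Ring A] [Algebra ℂ A]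
    (pd : Fin 2 → A → A) (a v : Fin 2 → A) : A :=
  (cov pd a v 1 (cov pd a v 0 ![1, 0]) - cov pd a v 0 (cov pd a v 1 ![1, 0])) 1 * a 1

/-- For the Levi-Civita connection of the diagonal metric `diag(a₁,a₂)` on `A²`:
`4R_{1,2,1,2} = (∂_1a_1)a_1⁻¹(∂_1a_2) + (∂_2a_1)a_2⁻¹(∂_2a_2) + (∂_2a_1)a_1⁻¹(∂_2a_1)
 + (∂_1a_2)a_2⁻¹(∂_1a_2) − 2(∂_1∂_1a_2 + ∂_2∂_2a_1)`. -/
theorem stmt11 {A : Type*} [Ring A] [Algebra ℂ A]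
    (pd : Fin 2 → A → A) (a v : Fin 2 → A)
    (hadd : ∀ j (x y : A), pd j (x + y) = pd j x + pd j y)
    (hLeib : ∀ j (x y : A), pd j (x * y) = pd j x * y + x * pd j y)
    (hsmul : ∀ j (c : ℂ) (x : A), pd j (c • x) = c • pd j x)
    (hcomm : ∀ x : A, pd 0 (pd 1 x) = pd 1 (pd 0 x))
    (hv : ∀ l, a l * v l = 1 ∧ v l * a l = 1) :
    (4 : ℂ) • R1212 pd a v =
      pd 0 (a 0) * v 0 * pd 0 (a 1) + pd 1 (a 0) * v 1 * pd 1 (a 1)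
        + pd 1 (a 0) * v 0 * pd 1 (a 0) + pd 0 (a 1) * v 1 * pd 0 (a 1)
        - (2 : ℂ) • (pd 0 (pd 0 (a 1)) + pd 1 (pd 1 (a 0))) := by
  have h1 : ∀ j, pd j (1 : A) = 0 := by
    intro j
    have := hLeib j 1 1
    simpa using this
  have h0 : ∀ j, pd j (0 : A) = 0 := by
    intro j
    have := hadd j 0 0
    simpa using this
  have hpv : ∀ j l, pd j (v l) = - (v l * pd j (a l) * v l) := by
    intro j l
    have h := hLeib j (v l) (a l)
    rw [(hv l).2, h1] at h
    have h2 : pd j (v l) * a l = - (v l * pd j (a l)) := by linear_combination (norm := noncomm_ring) -h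
    calc pd j (v l) = pd j (v l) * (a l * v l) := by rw [(hv l).1, mul_one]
    _ = pd j (v l) * a l * v l := by rw [mul_assoc]
    _ = - (v l * pd j (a l) * v l) := by rw [h2]; noncomm_ring
  simp only [R1212, Pi.sub_apply, cov, nab, Gamma, Fin.sum_univ_two, Matrix.cons_val_zero, Matrix.cons_val_one,
    Matrix.head_cons, Fin.isValue, one_ne_zero, zero_ne_one, if_true, if_false, ite_true, ite_false,
    reduceIte, h1, h0, hadd, hLeib, hsmul, hpv]
  have hneg : ∀ j (x : A), pd j (-x) = - pd j x := by
    intro j x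
    have h := hadd j x (-x)
    rw [add_neg_cancel, h0] at h
    exact (neg_eq_of_add_eq_zero_right h.symm).symm
  simp only [zero_mul, mul_zero, zero_add, add_zero, one_mul, zero_sub, sub_zero,
    add_sub_cancel_right, hneg, smul_neg, neg_neg, neg_mul, mul_neg]
  simp only [neg_zero, add_zero, smul_mul_assoc, mul_smul_comm, smul_smul, sub_mul, add_mul,
    neg_mul, smul_add, smul_sub, smul_neg, mul_assoc, (hv 1).2, mul_one]
  norm_num
  module
end

section
/- (Gauss–Bonnet for symplectic deformations) Let A be a unital *-algebra with commuting derivations ∂_1, ∂_2 and a trace τ with τ(xy)=τ(yx). If a_1 a_2 = 1 with a_2 positive invertible (so a_1 = a_2⁻¹), then τ(a_1^{−1/2} R_{1,2,1,2} a_2^{−1/2}) = τ(R_{1,2,1,2}) = 0, where R_{1,2,1,2} is the curvature component of the diagonal metric diag(a_2⁻¹, a_2). -/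
/-- Gauss–Bonnet for symplectic deformations: for the diagonal metric
`diag(a₂⁻¹, a₂)` (i.e. `a₁a₂ = 1`), one has
`τ(a_1^{-1/2} R_{1,2,1,2} a_2^{-1/2}) = τ(R_{1,2,1,2}) = 0`. -/
theorem stmt14 {A : Type*} [Ring A] [Algebra ℂ A] [StarRing A]
    (pd : Fin 2 → A → A)
    (hadd : ∀ j (x y : A), pd j (x + y) = pd j x + pd j y)
    (hLeib : ∀ j (x y : A), pd j (x * y) = pd j x * y + x * pd j y)
    (hsmul : ∀ j (c : ℂ) (x : A), pd j (c • x) = c • pd j x)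
    (hcomm : ∀ x : A, pd 0 (pd 1 x) = pd 1 (pd 0 x))
    (a₂ b : A) (hb : a₂ * b = 1 ∧ b * a₂ = 1)  -- `b = a₂⁻¹ = a₁`
    (τ : A →ₗ[ℂ] ℂ)
    (hτtr : ∀ x y : A, τ (x * y) = τ (y * x))
    (hτd : ∀ j (x : A), τ (pd j x) = 0)
    -- inverse square roots `s = a₁^{-1/2}`, `t = a₂^{-1/2}`, with `t * s = 1`
    (s t : A) (hst : t * s = 1) (hts : s * t = 1)
    (R1212 : A)
    (hR : (4 : ℂ) • R1212 =
      pd 0 b * a₂ * pd 0 a₂ + pd 1 b * b * pd 1 a₂ + pd 1 b * a₂ * pd 1 b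
        + pd 0 a₂ * b * pd 0 a₂
        - (2 : ℂ) • (pd 0 (pd 0 a₂) + pd 1 (pd 1 b))) :
    τ (s * R1212 * t) = τ R1212 ∧ τ R1212 = 0 := by
  obtain ⟨hab, hba⟩ := hb
  have hone : ∀ j, pd j (1 : A) = 0 := by
    intro j
    have h := hLeib j 1 1
    simp only [one_mul, mul_one] at h
    have : pd j (1:A) + pd j 1 = pd j 1 + 0 := by rw [← h, add_zero]
    exact (add_left_cancel this)
  have hdb : ∀ j, pd j b = - (b * pd j a₂ * b) := by
    intro j
    have h := hLeib j a₂ b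
    rw [hab, hone] at h
    have h2 : b * (pd j a₂ * b + a₂ * pd j b) = b * 0 := by rw [← h]
    rw [mul_zero, mul_add, ← mul_assoc, ← mul_assoc, hba, one_mul] at h2
    exact eq_neg_of_add_eq_zero_right h2
  set X := pd 0 a₂ with hX
  set Y := pd 1 a₂ with hY
  have e1 : τ (pd 0 b * a₂ * X) = - τ (b * X * X) := by
    rw [hdb 0]
    simp only [neg_mul, map_neg, neg_inj]
    rw [mul_assoc (b * X) b a₂, hba, mul_one]
  have e4 : τ (X * b * X) = τ (b * X * X) := by
    rw [mul_assoc, hτtr]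
  have e2 : τ (pd 1 b * b * Y) = - τ (Y * b * Y * b * b) := by
    rw [hdb 1]
    simp only [neg_mul, map_neg, neg_inj]
    rw [show Y * b * Y * b * b = Y * (b * Y * b * b) by simp [mul_assoc], hτtr]
  have e3 : τ (pd 1 b * a₂ * pd 1 b) = τ (Y * b * Y * b * b) := by
    rw [hdb 1]
    simp only [neg_mul, mul_neg, neg_neg]
    rw [show b * Y * b * a₂ * (b * Y * b) = b * Y * (b * a₂) * (b * Y * b) by
        simp [mul_assoc], hba, mul_one,
      show b * Y * (b * Y * b) = b * (Y * (b * Y * b)) by simp [mul_assoc], hτtr]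
    simp [mul_assoc]
  have h4 : (4 : ℂ) * τ R1212 = 0 := by
    have h := congrArg τ hR
    rw [map_smul, map_sub, map_smul, map_add, map_add, map_add, map_add,
      hτd, hτd, add_zero, smul_zero, sub_zero, e1, e2, e3, e4] at h
    simpa using h
  have hτR : τ R1212 = 0 := (mul_eq_zero.mp h4).resolve_left (by norm_num)
  refine ⟨?_, hτR⟩
  rw [hτtr (s * R1212) t, ← mul_assoc, hst, one_mul]
end
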